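/- Let B be a symmetric irreducible nonsingular M-matrix, β > 0, λ > λ_min(B), and let {u_l} be the monotone Newton iterates from u₀ converging to the positive solution u* with u* < u_{l+1} < u_l < u₀ componentwise. If ‖r(u_l)‖ ≥ η for all l ≤ l₀, where r(u) = β·diag(u^[2])u + Bu − λu, then l₀ ≤ ⌈(λ_max(B) + 3β·max(u₀^[2]) − λ)·‖u₀ − u*‖₁ / η⌉; i.e., the number of iterations before the residual drops below η is at most linear in ‖u₀ − u*‖₁/η. -/

import Mathlib

/-!
Each Newton correction `e_l = v_l - v_{l+1}` is componentwise positive and the residual is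
`r(v_l) = J(v_l) e_l`. The Jacobian `J(v_l)` is a symmetric Z-matrix with `J(v_l) u* ≥ 0`, hence
positive semidefinite, and its Rayleigh quotient is at most `C = λ_max(B) + 3β·max(v₀^[2]) − λ`;
so `η ≤ ‖r(v_l)‖ ≤ C‖e_l‖₂ ≤ C‖e_l‖₁`. Summing over `l ≤ l₀`, the 1-norms telescope to at most
`‖v₀ − u*‖₁`, whence `(l₀ + 1)η ≤ C‖v₀ − u*‖₁`.
-/

open Matrix Filter Topology

/-- Spectral radius of a real matrix (over its complex spectrum). -/
noncomputable def specRad {n : ℕ} (A : Matrix (Fin n) (Fin n) ℝ) : ℝ :=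
  sSup {r : ℝ | ∃ μ : ℂ, μ ∈ spectrum ℂ (A.map (fun x => (x : ℂ))) ∧ r = ‖μ‖}

/-- Entrywise nonnegative matrix. -/
def MatNonneg {n : ℕ} (A : Matrix (Fin n) (Fin n) ℝ) : Prop := ∀ i j, 0 ≤ A i j

/-- `B` is an M-matrix: `B = s•I - A` with `A ≥ 0` and `s ≥ ρ(A)`. -/
def IsMMat {n : ℕ} (B : Matrix (Fin n) (Fin n) ℝ) : Prop :=
  ∃ s A, MatNonneg A ∧ specRad A ≤ s ∧ B = s • (1 : Matrix (Fin n) (Fin n) ℝ) - A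

/-- `B` is a nonsingular M-matrix: `B = s•I - A` with `A ≥ 0` and `s > ρ(A)`. -/
def IsNsMMat {n : ℕ} (B : Matrix (Fin n) (Fin n) ℝ) : Prop :=
  ∃ s A, MatNonneg A ∧ specRad A < s ∧ B = s • (1 : Matrix (Fin n) (Fin n) ℝ) - A

/-- Irreducibility: no nonempty proper index set `I` with `B i j = 0` for `i ∈ I`, `j ∉ I`. -/
def MatIrred {n : ℕ} (B : Matrix (Fin n) (Fin n) ℝ) : Prop :=
  ¬ ∃ I : Finset (Fin n), I.Nonempty ∧ I ≠ Finset.univ ∧ ∀ i ∈ I, ∀ j ∉ I, B i j = 0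

/-- `A(u) = β·diag(u^[2]) + B`. -/
noncomputable def AU {n : ℕ} (β : ℝ) (B : Matrix (Fin n) (Fin n) ℝ) (u : Fin n → ℝ) :
    Matrix (Fin n) (Fin n) ℝ :=
  β • Matrix.diagonal (fun i => u i ^ 2) + B

/-- Jacobian `J(u,λ) = 3β·diag(u^[2]) + B - λI`. -/
noncomputable def JU {n : ℕ} (β lam : ℝ) (B : Matrix (Fin n) (Fin n) ℝ) (u : Fin n → ℝ) :
    Matrix (Fin n) (Fin n) ℝ :=
  (3 * β) • Matrix.diagonal (fun i => u i ^ 2) + B - lam • (1 : Matrix (Fin n) (Fin n) ℝ)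

/-- Smallest (real) eigenvalue. -/
noncomputable def smallestEig {n : ℕ} (B : Matrix (Fin n) (Fin n) ℝ) : ℝ :=
  sInf {μ : ℝ | ∃ v : Fin n → ℝ, v ≠ 0 ∧ B.mulVec v = μ • v}

/-- Largest (real) eigenvalue. -/
noncomputable def largestEig {n : ℕ} (B : Matrix (Fin n) (Fin n) ℝ) : ℝ :=
  sSup {μ : ℝ | ∃ v : Fin n → ℝ, v ≠ 0 ∧ B.mulVec v = μ • v}

/-- Euclidean norm of a vector. -/
noncomputable def vecNorm {n : ℕ} (u : Fin n → ℝ) : ℝ := Real.sqrt (∑ i, u i ^ 2)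

/-- 1-norm of a vector. -/
noncomputable def vecNorm1 {n : ℕ} (u : Fin n → ℝ) : ℝ := ∑ i, |u i|

/-- Spectral (operator 2-) norm of a matrix. -/
noncomputable def matNorm {n : ℕ} (A : Matrix (Fin n) (Fin n) ℝ) : ℝ :=
  sSup {r : ℝ | ∃ x : Fin n → ℝ, vecNorm x ≤ 1 ∧ r = vecNorm (A.mulVec x)}


theorem Matrix.mem_spectrum_iff_exists_mulVec_eq_smul {ι K : Type*} [Fintype ι] [DecidableEq ι]
    [Field K] (B : Matrix ι ι K) (μ : K) :
    μ ∈ spectrum K B ↔ ∃ v : ι → K, v ≠ 0 ∧ B *ᵥ v = μ • v := by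
  rw [← Matrix.spectrum_toLin', ← Module.End.hasEigenvalue_iff_mem_spectrum,
    Module.End.hasEigenvalue_iff, Submodule.ne_bot_iff]
  simp only [Module.End.mem_eigenspace_iff, Matrix.toLin'_apply]
  exact exists_congr fun v => and_comm

theorem le_largestEig_of_mem_spectrum {n : ℕ} {B : Matrix (Fin n) (Fin n) ℝ} {μ : ℝ}
    (hμ : μ ∈ spectrum ℝ B) : μ ≤ largestEig B := by
  have hset : {μ : ℝ | ∃ v : Fin n → ℝ, v ≠ 0 ∧ B *ᵥ v = μ • v} = spectrum ℝ B := by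
    ext μ; exact (B.mem_spectrum_iff_exists_mulVec_eq_smul μ).symm
  unfold largestEig
  rw [hset]
  exact le_csSup B.finite_real_spectrum.bddAbove hμ

open scoped MatrixOrder in
theorem dotProduct_mulVec_le_largestEig_mul {n : ℕ} {B : Matrix (Fin n) (Fin n) ℝ}
    (hB : B.IsSymm) (x : Fin n → ℝ) :
    x ⬝ᵥ B *ᵥ x ≤ largestEig B * (x ⬝ᵥ x) := by
  have hle : B ≤ algebraMap ℝ _ (largestEig B) :=
    (le_algebraMap_iff_spectrum_le (isHermitian_iff_isSymm.2 hB)).2 fun μ hμ => le_largestEig_of_mem_spectrum hμ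
  have := (Matrix.le_iff.1 hle).dotProduct_mulVec_nonneg x
  simpa [Algebra.algebraMap_eq_smul_one, Matrix.sub_mulVec, Matrix.smul_mulVec, dotProduct_smul]
    using this

theorem IsNsMMat.apply_nonpos_of_ne {n : ℕ} {B : Matrix (Fin n) (Fin n) ℝ} (hB : IsNsMMat B)
    {i j : Fin n} (hij : i ≠ j) : B i j ≤ 0 := by
  obtain ⟨s, A, hA, -, rfl⟩ := hB
  simpa [Matrix.one_apply_ne hij] using hA i j

theorem Matrix.IsSymm.two_mul_dotProduct_mulVec_eq {ι : Type*} [Fintype ι]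
    {M : Matrix ι ι ℝ} (hM : M.IsSymm) {w : ι → ℝ} (hw : ∀ i, w i ≠ 0) (x : ι → ℝ) :
    2 * (x ⬝ᵥ M *ᵥ x) = 2 * ∑ i, x i ^ 2 / w i * (M *ᵥ w) i
      + ∑ i, ∑ j, -M i j * (w i * w j) * (x i / w i - x j / w j) ^ 2 := by
  set P := ∑ i, ∑ j, M i j * (x i ^ 2 * w j / w i)
  have hquad : x ⬝ᵥ M *ᵥ x = ∑ i, ∑ j, M i j * x j * x i := by
    simp only [dotProduct, Matrix.mulVec, Finset.mul_sum]
    exact Finset.sum_congr rfl fun i _ => Finset.sum_congr rfl fun j _ => by ring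
  have hrow : ∑ i, x i ^ 2 / w i * (M *ᵥ w) i = P := by
    simp only [Matrix.mulVec, dotProduct, Finset.mul_sum]
    exact Finset.sum_congr rfl fun i _ => Finset.sum_congr rfl fun j _ => by ring
  have hswap : ∑ i, ∑ j, M i j * (x j ^ 2 * w i / w j) = P := by
    rw [Finset.sum_comm]
    exact Finset.sum_congr rfl fun i _ => Finset.sum_congr rfl fun j _ => by rw [hM.apply i j]
  have hsq : ∀ i j, -M i j * (w i * w j) * (x i / w i - x j / w j) ^ 2
      = 2 * (M i j * x j * x i) - M i j * (x i ^ 2 * w j / w i)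
        - M i j * (x j ^ 2 * w i / w j) := by
    intro i j
    field_simp [hw i, hw j]
    ring
  simp only [hsq, Finset.sum_sub_distrib, ← Finset.mul_sum, hswap]
  rw [hquad, hrow]
  ring

theorem Matrix.posSemidef_of_offDiag_nonpos_of_mulVec_nonneg {ι : Type*} [Fintype ι]
    {M : Matrix ι ι ℝ} (hM : M.IsSymm) (hoff : ∀ i j, i ≠ j → M i j ≤ 0)
    {w : ι → ℝ} (hw : ∀ i, 0 < w i) (hMw : ∀ i, 0 ≤ (M *ᵥ w) i) : M.PosSemidef := by
  refine .of_dotProduct_mulVec_nonneg (isHermitian_iff_isSymm.2 hM) fun x => ?_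
  have hpair : ∀ i j, 0 ≤ -M i j * (w i * w j) * (x i / w i - x j / w j) ^ 2 := by
    intro i j
    rcases eq_or_ne i j with rfl | hij
    · simp
    · exact mul_nonneg (mul_nonneg (neg_nonneg.2 (hoff i j hij)) (mul_pos (hw i) (hw j)).le)
        (sq_nonneg _)
  have hrow : ∀ i, 0 ≤ x i ^ 2 / w i * (M *ᵥ w) i := fun i =>
    mul_nonneg (div_nonneg (sq_nonneg _) (hw i).le) (hMw i)
  have hrows := Finset.sum_nonneg fun i (_ : i ∈ Finset.univ) => hrow i
  have hpairs := Finset.sum_nonneg fun i (_ : i ∈ Finset.univ) =>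
    Finset.sum_nonneg fun j (_ : j ∈ Finset.univ) => hpair i j
  have := hM.two_mul_dotProduct_mulVec_eq (fun i => (hw i).ne') x
  rw [star_trivial]
  linarith

open scoped MatrixOrder in
theorem Matrix.PosSemidef.mulVec_dotProduct_mulVec_le {ι : Type*} [Fintype ι]
    {M : Matrix ι ι ℝ} (hM : M.PosSemidef) {C : ℝ} (hC : 0 ≤ C)
    (hMC : ∀ x, x ⬝ᵥ M *ᵥ x ≤ C * (x ⬝ᵥ x)) (x : ι → ℝ) :
    (M *ᵥ x) ⬝ᵥ (M *ᵥ x) ≤ C ^ 2 * (x ⬝ᵥ x) := by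
  classical
  set S := CFC.sqrt M
  have hSS : S * S = M := CFC.sqrt_mul_sqrt_self M hM.nonneg
  have hSsymm : Sᵀ = S := isHermitian_iff_isSymm.1 (CFC.sqrt_nonneg M).posSemidef.1
  have hS : ∀ y, (S *ᵥ y) ⬝ᵥ (S *ᵥ y) = y ⬝ᵥ M *ᵥ y := fun y => by
    rw [Matrix.dotProduct_mulVec, ← Matrix.mulVec_transpose, hSsymm, Matrix.mulVec_mulVec, hSS,
      dotProduct_comm]
  calc (M *ᵥ x) ⬝ᵥ (M *ᵥ x) = (S *ᵥ x) ⬝ᵥ M *ᵥ (S *ᵥ x) := by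
        rw [← hSS, ← Matrix.mulVec_mulVec, hS, hSS]
    _ ≤ C * (x ⬝ᵥ M *ᵥ x) := (hMC _).trans_eq (by rw [hS])
    _ ≤ C * (C * (x ⬝ᵥ x)) := mul_le_mul_of_nonneg_left (hMC x) hC
    _ = C ^ 2 * (x ⬝ᵥ x) := by ring

theorem vecNorm_eq_sqrt_dotProduct {n : ℕ} (x : Fin n → ℝ) : vecNorm x = √(x ⬝ᵥ x) := by
  simp [vecNorm, dotProduct, sq]

theorem vecNorm_nonneg {n : ℕ} (x : Fin n → ℝ) : 0 ≤ vecNorm x := Real.sqrt_nonneg _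

theorem vecNorm_le_sum_of_nonneg {n : ℕ} {x : Fin n → ℝ} (hx : ∀ i, 0 ≤ x i) :
    vecNorm x ≤ ∑ i, x i := by
  rw [vecNorm, Real.sqrt_le_left (Finset.sum_nonneg fun i _ => hx i)]
  exact Finset.sum_sq_le_sq_sum_of_nonneg fun i _ => hx i

theorem vecNorm_mulVec_le {n : ℕ} {M : Matrix (Fin n) (Fin n) ℝ} (hM : M.PosSemidef) {C : ℝ}
    (hMC : ∀ x, x ⬝ᵥ M *ᵥ x ≤ C * (x ⬝ᵥ x)) (x : Fin n → ℝ) :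
    vecNorm (M *ᵥ x) ≤ C * vecNorm x := by
  rcases lt_or_ge C 0 with hC | hC
  · have hx : x ⬝ᵥ x = 0 := by
      have hxx : 0 ≤ x ⬝ᵥ x := Finset.sum_nonneg fun i _ => mul_self_nonneg (x i)
      have hxMx := hM.dotProduct_mulVec_nonneg x
      rw [star_trivial] at hxMx
      nlinarith [hMC x]
    rw [dotProduct_self_eq_zero.1 hx]
    simp [vecNorm]
  · rw [vecNorm_eq_sqrt_dotProduct, vecNorm_eq_sqrt_dotProduct, ← Real.sqrt_sq hC,
      ← Real.sqrt_mul (sq_nonneg _)]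
    exact Real.sqrt_le_sqrt (hM.mulVec_dotProduct_mulVec_le hC hMC x)

section Newton

variable {n : ℕ} {β lam : ℝ} {B : Matrix (Fin n) (Fin n) ℝ}

theorem AU_mulVec_apply (u x : Fin n → ℝ) (i : Fin n) :
    (AU β B u *ᵥ x) i = β * (u i ^ 2 * x i) + (B *ᵥ x) i := by
  simp [AU, Matrix.add_mulVec, Matrix.smul_mulVec, Matrix.mulVec_diagonal]

theorem JU_mulVec_apply (u x : Fin n → ℝ) (i : Fin n) :
    (JU β lam B u *ᵥ x) i = 3 * β * (u i ^ 2 * x i) + (B *ᵥ x) i - lam * x i := by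
  simp [JU, Matrix.sub_mulVec, Matrix.add_mulVec, Matrix.smul_mulVec, Matrix.mulVec_diagonal]

theorem JU_isSymm (hB : B.IsSymm) (u : Fin n → ℝ) : (JU β lam B u).IsSymm := by
  simp only [JU, Matrix.IsSymm, Matrix.transpose_sub, Matrix.transpose_add, Matrix.transpose_smul,
    Matrix.diagonal_transpose, Matrix.transpose_one, hB.eq]

theorem JU_apply_of_ne (u : Fin n → ℝ) {i j : Fin n} (hij : i ≠ j) : JU β lam B u i j = B i j := by
  simp [JU, Matrix.diagonal_apply_ne _ hij, Matrix.one_apply_ne hij]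

theorem JU_mulVec_fixedPoint_nonneg (hβ : 0 ≤ β) {ustar u : Fin n → ℝ}
    (hstar : ∀ i, 0 ≤ ustar i) (hfix : AU β B ustar *ᵥ ustar = lam • ustar)
    (hu : ∀ i, ustar i ≤ u i) (i : Fin n) : 0 ≤ (JU β lam B u *ᵥ ustar) i := by
  -- `(J(u) u*)ᵢ = 3β uᵢ² u*ᵢ - β u*ᵢ³ ≥ 2β u*ᵢ³` by the fixed-point equation
  have hfix_i := congrFun hfix i
  rw [AU_mulVec_apply, Pi.smul_apply, smul_eq_mul] at hfix_i
  have hsq : ustar i ^ 2 ≤ u i ^ 2 := pow_le_pow_left₀ (hstar i) (hu i) 2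
  rw [JU_mulVec_apply]
  nlinarith [mul_nonneg (mul_nonneg hβ (hstar i)) (sub_nonneg.2 hsq),
    mul_nonneg hβ (pow_nonneg (hstar i) 3)]

theorem JU_posSemidef (hB : B.IsSymm) (hBoff : ∀ i j, i ≠ j → B i j ≤ 0) (hβ : 0 ≤ β)
    {ustar u : Fin n → ℝ} (hstar : ∀ i, 0 < ustar i)
    (hfix : AU β B ustar *ᵥ ustar = lam • ustar) (hu : ∀ i, ustar i ≤ u i) :
    (JU β lam B u).PosSemidef :=
  Matrix.posSemidef_of_offDiag_nonpos_of_mulVec_nonneg (JU_isSymm hB u)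
    (fun i j hij => (JU_apply_of_ne u hij).trans_le (hBoff i j hij)) hstar
    (JU_mulVec_fixedPoint_nonneg hβ (fun i => (hstar i).le) hfix hu)

theorem dotProduct_JU_mulVec_le (hB : B.IsSymm) (hβ : 0 ≤ β) {u : Fin n → ℝ} {S : ℝ}
    (hS : ∀ i, u i ^ 2 ≤ S) (x : Fin n → ℝ) :
    x ⬝ᵥ JU β lam B u *ᵥ x ≤ (largestEig B + 3 * β * S - lam) * (x ⬝ᵥ x) := by
  have hdiag : ∑ i, x i * (3 * β * (u i ^ 2 * x i)) ≤ 3 * β * S * (x ⬝ᵥ x) := by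
    rw [dotProduct, Finset.mul_sum]
    refine Finset.sum_le_sum fun i _ => ?_
    nlinarith [mul_le_mul_of_nonneg_left (hS i) (mul_nonneg hβ (mul_self_nonneg (x i)))]
  have hsplit : x ⬝ᵥ JU β lam B u *ᵥ x
      = ∑ i, x i * (3 * β * (u i ^ 2 * x i)) + x ⬝ᵥ B *ᵥ x - lam * (x ⬝ᵥ x) := by
    simp only [dotProduct, JU_mulVec_apply, mul_add, mul_sub, Finset.sum_add_distrib,
      Finset.sum_sub_distrib, Finset.mul_sum]
    exact congrArg _ (Finset.sum_congr rfl fun i _ => by ring)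
  rw [hsplit]
  nlinarith [dotProduct_mulVec_le_largestEig_mul hB x]

theorem AU_mulVec_sub_smul_eq_JU_mulVec_sub {u w : Fin n → ℝ}
    (hw : JU β lam B u *ᵥ w = fun i => 2 * β * u i ^ 3) :
    AU β B u *ᵥ u - lam • u = JU β lam B u *ᵥ (u - w) := by
  rw [Matrix.mulVec_sub, hw]
  ext i
  simp only [Pi.sub_apply, Pi.smul_apply, smul_eq_mul, AU_mulVec_apply, JU_mulVec_apply]
  ring

theorem vecNorm_residual_le (hB : B.IsSymm) (hBoff : ∀ i j, i ≠ j → B i j ≤ 0) (hβ : 0 ≤ β)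
    {ustar u w : Fin n → ℝ} (hstar : ∀ i, 0 < ustar i)
    (hfix : AU β B ustar *ᵥ ustar = lam • ustar) (hu : ∀ i, ustar i ≤ u i) {S : ℝ}
    (hS : ∀ i, u i ^ 2 ≤ S) (hw : JU β lam B u *ᵥ w = fun i => 2 * β * u i ^ 3) :
    vecNorm (AU β B u *ᵥ u - lam • u) ≤ (largestEig B + 3 * β * S - lam) * vecNorm (u - w) := by
  rw [AU_mulVec_sub_smul_eq_JU_mulVec_sub hw]
  exact vecNorm_mulVec_le (JU_posSemidef hB hBoff hβ hstar hfix hu)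
    (dotProduct_JU_mulVec_le hB hβ hS) _

end Newton

theorem natCast_le_ceil_of_forall_le_mul_sub_succ {η C b : ℝ} {a : ℕ → ℝ} {l₀ : ℕ}
    (hη : 0 < η) (hC : 0 ≤ C) (hstep : ∀ l ≤ l₀, η ≤ C * (a l - a (l + 1)))
    (hb : b ≤ a (l₀ + 1)) : (l₀ : ℤ) ≤ ⌈C * (a 0 - b) / η⌉ := by
  have hsum : (l₀ + 1 : ℝ) * η ≤ C * (a 0 - b) :=
    calc (l₀ + 1 : ℝ) * η = ∑ _l ∈ Finset.range (l₀ + 1), η := by simp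
      _ ≤ ∑ l ∈ Finset.range (l₀ + 1), C * (a l - a (l + 1)) :=
        Finset.sum_le_sum fun l hl => hstep l (Nat.lt_succ_iff.1 (Finset.mem_range.1 hl))
      _ = C * (a 0 - a (l₀ + 1)) := by rw [← Finset.mul_sum, Finset.sum_range_sub']
      _ ≤ C * (a 0 - b) := by gcongr
  refine Int.le_ceil_iff.2 ?_
  rw [Int.cast_natCast, lt_div_iff₀ hη]
  linarith

theorem stmt19_general {n : ℕ} (B : Matrix (Fin n) (Fin n) ℝ) (β lam η : ℝ)
    (hB1 : B.IsSymm) (hB3 : IsNsMMat B) (hβ : 0 < β)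
    (hη : 0 < η)
    (ustar : Fin n → ℝ) (hstar : ∀ i, 0 < ustar i)
    (hstareq : (AU β B ustar).mulVec ustar = lam • ustar)
    (v : ℕ → Fin n → ℝ)
    (hrec : ∀ k, (JU β lam B (v k)).mulVec (v (k + 1)) = fun i => 2 * β * (v k i) ^ 3)
    (hmono : ∀ k, ∀ i, ustar i < v (k + 1) i ∧ v (k + 1) i < v k i)
    (l₀ : ℕ)
    (hres : ∀ l, l ≤ l₀ → η ≤ vecNorm ((AU β B (v l)).mulVec (v l) - lam • v l)) :
    (l₀ : ℤ) ≤ ⌈(largestEig B + 3 * β * (⨆ i, (v 0 i) ^ 2) - lam) *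
      vecNorm1 (v 0 - ustar) / η⌉ := by
  set C := largestEig B + 3 * β * (⨆ i, (v 0 i) ^ 2) - lam
  have hanti : Antitone v := antitone_nat_of_succ_le fun l i => (hmono l i).2.le
  have hstar_lt : ∀ l i, ustar i < v l i := fun l i =>
    (hmono l i).1.trans_le (hanti l.le_succ i)
  have hsq_le : ∀ l i, v l i ^ 2 ≤ ⨆ i, v 0 i ^ 2 := fun l i =>
    (pow_le_pow_left₀ ((hstar i).trans (hstar_lt l i)).le (hanti l.zero_le i) 2).trans
      (le_ciSup (f := fun i => v 0 i ^ 2) (Set.finite_range _).bddAbove i)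
  have hresidual : ∀ l, vecNorm ((AU β B (v l)).mulVec (v l) - lam • v l)
      ≤ C * vecNorm (v l - v (l + 1)) := fun l =>
    vecNorm_residual_le hB1 (fun i j => hB3.apply_nonpos_of_ne) hβ.le hstar hstareq
      (fun i => (hstar_lt l i).le) (hsq_le l) (hrec l)
  have hC : 0 < C := pos_of_mul_pos_left
    ((hη.trans_le (hres 0 l₀.zero_le)).trans_le (hresidual 0)) (vecNorm_nonneg _)
  have hstep : ∀ l ≤ l₀, η ≤ C * (∑ i, v l i - ∑ i, v (l + 1) i) := fun l hl => by
    rw [← Finset.sum_sub_distrib]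
    exact (hres l hl).trans <| (hresidual l).trans <| mul_le_mul_of_nonneg_left
      (vecNorm_le_sum_of_nonneg fun i => sub_nonneg.2 (hmono l i).2.le) hC.le
  have hnorm1 : vecNorm1 (v 0 - ustar) = ∑ i, v 0 i - ∑ i, ustar i := by
    rw [vecNorm1, ← Finset.sum_sub_distrib]
    exact Finset.sum_congr rfl fun i _ => abs_of_pos (sub_pos.2 (hstar_lt 0 i))
  rw [hnorm1]
  exact natCast_le_ceil_of_forall_le_mul_sub_succ (a := fun l => ∑ i, v l i) hη hC.le
    hstep (Finset.sum_le_sum fun i _ => (hstar_lt (l₀ + 1) i).le)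

theorem stmt19 {n : ℕ} [NeZero n] (B : Matrix (Fin n) (Fin n) ℝ) (β lam η : ℝ)
    (hB1 : B.IsSymm) (hB2 : MatIrred B) (hB3 : IsNsMMat B) (hβ : 0 < β)
    (hlam : smallestEig B < lam) (hη : 0 < η)
    (ustar : Fin n → ℝ) (hstar : ∀ i, 0 < ustar i)
    (hstareq : (AU β B ustar).mulVec ustar = lam • ustar)
    (v : ℕ → Fin n → ℝ)
    (hrec : ∀ k, (JU β lam B (v k)).mulVec (v (k + 1)) = fun i => 2 * β * (v k i) ^ 3)
    (hmono : ∀ k, ∀ i, ustar i < v (k + 1) i ∧ v (k + 1) i < v k i)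
    (l₀ : ℕ)
    (hres : ∀ l, l ≤ l₀ → η ≤ vecNorm ((AU β B (v l)).mulVec (v l) - lam • v l)) :
    (l₀ : ℤ) ≤ ⌈(largestEig B + 3 * β * (⨆ i, (v 0 i) ^ 2) - lam) *
      vecNorm1 (v 0 - ustar) / η⌉ :=
  stmt19_general B β lam η hB1 hB3 hβ hη ustar hstar hstareq v hrec hmono l₀ hres
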